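/- arXiv:1804.10010 — 7 statements merged into one kernel-verified Lean document; each statement's English description precedes it below -/
import Mathlib

section
/- Let N be even, let d < N/2, and let S, T ⊆ [N] with 1 ≤ |S| + |T| ≤ d, |S| ≤ N/2 + 1, and |T| ≤ N/2. Then ((N/2 + 1)(N/2 − |T|)) / ((N/2)(N/2 − |S| + 1)) ≥ (N − 2d)/N. -/
/-- the key ratio inequality in the Majority lower bound. For N even,
d < N/2, and sizes s = |S|, t = |T| with 1 ≤ s+t ≤ d, s ≤ N/2+1, t ≤ N/2, we have
((N/2+1)(N/2-t)) / ((N/2)(N/2-s+1)) ≥ (N-2d)/N. -/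
theorem stmt5 (N d s t : ℕ) (hN : Even N) (hd : d < N / 2)
    (h1 : 1 ≤ s + t) (h2 : s + t ≤ d) (hs : s ≤ N / 2 + 1) (ht : t ≤ N / 2) :
    ((N : ℝ) / 2 + 1) * ((N : ℝ) / 2 - t) / (((N : ℝ) / 2) * ((N : ℝ) / 2 - s + 1))
      ≥ ((N : ℝ) - 2 * d) / N := by
  obtain ⟨m, hm⟩ := hN
  subst hm
  have hm2 : (m + m) / 2 = m := by omega
  rw [hm2] at hd hs ht
  have hsd : s ≤ d := by omega
  have htd : t ≤ d := by omega
  have hd1 : 1 ≤ d := by omega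
  -- real versions
  have hdm : (d : ℝ) < m := by exact_mod_cast hd
  have hsd' : (s : ℝ) ≤ d := by exact_mod_cast hsd
  have htd' : (t : ℝ) ≤ d := by exact_mod_cast htd
  have hd1' : (1 : ℝ) ≤ d := by exact_mod_cast hd1
  have hcast : ((m + m : ℕ) : ℝ) / 2 = (m : ℝ) := by push_cast; ring
  rw [hcast]
  have hmpos : (0 : ℝ) < m := by linarith
  have hNpos : (0 : ℝ) < ((m + m : ℕ) : ℝ) := by push_cast; linarith
  have hden : (0 : ℝ) < (m : ℝ) * ((m : ℝ) - s + 1) := by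
    apply mul_pos hmpos; linarith
  rw [ge_iff_le, div_le_div_iff₀ hNpos hden]
  push_cast
  nlinarith [mul_nonneg hmpos.le (mul_nonneg (Nat.cast_nonneg s : (0:ℝ) ≤ s) (sub_nonneg.2 hdm.le)),
    mul_nonneg hmpos.le (mul_nonneg (by linarith : (0:ℝ) ≤ (m:ℝ) + 1) (sub_nonneg.2 htd'))]
end

section
/- Let N be even and suppose p and q are real polynomials of degree at most d of the form p(k) = Σ_{(S,T)} a_{S,T} · γ_{S,T} · k(k−1)···(k−|S|+1)·(N−k)···(N−k−|T|+1) and similarly q with nonnegative coefficients a_{S,T}, b_{S,T} ≥ 0 (where γ_{S,T} = (N−|S|−|T|)!/N! > 0 and 1 ≤ |S|+|T| ≤ d), with q(N/2), q(N/2+1) > 0. Suppose furthermore 0 ≤ p(N/2) ≤ ε·q(N/2) and (1−ε)·q(N/2+1) ≤ p(N/2+1), where 0 < ε < 1/2. Then d ≥ ((N+1) − sqrt((ε/(1−ε))(N²+2N) + 1))/2. In particular for ε = 1/3, d ≥ N/8. -/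
set_option maxHeartbeats 1000000

open Finset

open Finset

lemma tele (x : ℝ) (s : ℕ) :
    (x + 1 - s) * ∏ j ∈ Finset.range s, (x + 1 - (j:ℝ))
      = (x + 1) * ∏ j ∈ Finset.range s, (x - (j:ℝ)) := by
  induction s with
  | zero => simp
  | succ n ih =>
    rw [Finset.prod_range_succ, Finset.prod_range_succ]
    push_cast
    linear_combination (x - (n:ℝ)) * ih

lemma key_facts (m d s t : ℕ) (hst1 : 1 ≤ s + t) (hst2 : s + t ≤ d) (hdm : d ≤ m) :
    (0 < ∏ j ∈ Finset.range s, ((m:ℝ) - (j:ℝ))) ∧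
    (0 < ∏ j ∈ Finset.range t, ((m:ℝ) - (j:ℝ))) ∧
    (0 < ∏ j ∈ Finset.range s, ((m:ℝ) + 1 - (j:ℝ))) ∧
    (0 ≤ ∏ j ∈ Finset.range t, ((m:ℝ) - 1 - (j:ℝ))) ∧
    (((m:ℝ) + 1 - (s:ℝ)) * ∏ j ∈ Finset.range s, ((m:ℝ) + 1 - (j:ℝ))
       = ((m:ℝ) + 1) * ∏ j ∈ Finset.range s, ((m:ℝ) - (j:ℝ))) ∧
    ((m:ℝ) * ∏ j ∈ Finset.range t, ((m:ℝ) - 1 - (j:ℝ))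
       = ((m:ℝ) - (t:ℝ)) * ∏ j ∈ Finset.range t, ((m:ℝ) - (j:ℝ))) := by
  have hs : s ≤ m := le_trans (Nat.le_add_right s t) (le_trans hst2 hdm)
  have ht : t ≤ m := le_trans (Nat.le_add_left t s) (le_trans hst2 hdm)
  have hsr : (s:ℝ) ≤ (m:ℝ) := by exact_mod_cast hs
  have htr : (t:ℝ) ≤ (m:ℝ) := by exact_mod_cast ht
  refine ⟨Finset.prod_pos fun j hj => ?_, Finset.prod_pos fun j hj => ?_,
    Finset.prod_pos fun j hj => ?_, Finset.prod_nonneg fun j hj => ?_, tele (m:ℝ) s, ?_⟩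
  · have : (j:ℝ) < (m:ℝ) := by exact_mod_cast lt_of_lt_of_le (Finset.mem_range.mp hj) hs
    linarith
  · have : (j:ℝ) < (m:ℝ) := by exact_mod_cast lt_of_lt_of_le (Finset.mem_range.mp hj) ht
    linarith
  · have : (j:ℝ) < (m:ℝ) := by exact_mod_cast lt_of_lt_of_le (Finset.mem_range.mp hj) hs
    linarith
  · have : (j:ℝ) + 1 ≤ (t:ℝ) := by exact_mod_cast Finset.mem_range.mp hj
    linarith
  · have h := tele ((m:ℝ) - 1) t
    have hprod : ∏ j ∈ Finset.range t, ((m:ℝ) - 1 + 1 - (j:ℝ))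
        = ∏ j ∈ Finset.range t, ((m:ℝ) - (j:ℝ)) :=
      Finset.prod_congr rfl fun j _ => by ring
    rw [hprod] at h
    linear_combination -h

lemma key1 (m d s t : ℕ) (hst1 : 1 ≤ s + t) (hst2 : s + t ≤ d) (hdm : d ≤ m) :
    ((m:ℝ) + 1 - (d:ℝ)) *
        ((∏ j ∈ Finset.range s, ((m:ℝ) + 1 - (j:ℝ))) *
          ∏ j ∈ Finset.range t, ((m:ℝ) - 1 - (j:ℝ)))
      ≤ ((m:ℝ) + 1) *
        ((∏ j ∈ Finset.range s, ((m:ℝ) - (j:ℝ))) *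
          ∏ j ∈ Finset.range t, ((m:ℝ) - (j:ℝ))) := by
  obtain ⟨hP1, hP2, hQ1, hQ2, E1, E2⟩ := key_facts m d s t hst1 hst2 hdm
  set P1 := ∏ j ∈ Finset.range s, ((m:ℝ) - (j:ℝ))
  set P2 := ∏ j ∈ Finset.range t, ((m:ℝ) - (j:ℝ))
  set Q1 := ∏ j ∈ Finset.range s, ((m:ℝ) + 1 - (j:ℝ))
  set Q2 := ∏ j ∈ Finset.range t, ((m:ℝ) - 1 - (j:ℝ))
  have hm1 : 1 ≤ m := le_trans hst1 (le_trans hst2 hdm)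
  have hμ1 : (1:ℝ) ≤ (m:ℝ) := by exact_mod_cast hm1
  have hdr : (d:ℝ) ≤ (m:ℝ) := by exact_mod_cast hdm
  have hsdr : (s:ℝ) ≤ (d:ℝ) := by exact_mod_cast le_trans (Nat.le_add_right s t) hst2
  have htdr : (t:ℝ) ≤ (d:ℝ) := by exact_mod_cast le_trans (Nat.le_add_left t s) hst2
  have htr : (t:ℝ) ≤ (m:ℝ) := by linarith
  have hμ1s : (0:ℝ) < (m:ℝ) + 1 - (s:ℝ) := by linarith
  have hμt : (0:ℝ) ≤ (m:ℝ) - (t:ℝ) := by linarith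
  have hcore : ((m:ℝ) + 1 - (d:ℝ)) * ((m:ℝ) - (t:ℝ)) ≤ (m:ℝ) * ((m:ℝ) + 1 - (s:ℝ)) := by
    have h1 : ((m:ℝ) + 1 - (d:ℝ)) * ((m:ℝ) - (t:ℝ)) ≤ ((m:ℝ) + 1 - (s:ℝ)) * ((m:ℝ) - (t:ℝ)) :=
      mul_le_mul_of_nonneg_right (by linarith) hμt
    have h2 : ((m:ℝ) + 1 - (s:ℝ)) * ((m:ℝ) - (t:ℝ)) ≤ ((m:ℝ) + 1 - (s:ℝ)) * (m:ℝ) :=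
      mul_le_mul_of_nonneg_left (by linarith) hμ1s.le
    linarith
  have Eq : ((m:ℝ) * ((m:ℝ) + 1 - (s:ℝ))) * (((m:ℝ) + 1 - (d:ℝ)) * (Q1 * Q2))
      = (((m:ℝ) + 1 - (d:ℝ)) * ((m:ℝ) - (t:ℝ))) * (((m:ℝ) + 1) * (P1 * P2)) := by
    linear_combination (((m:ℝ) + 1 - (d:ℝ)) * (m:ℝ) * Q2) * E1
      + (((m:ℝ) + 1 - (d:ℝ)) * ((m:ℝ) + 1) * P1) * E2
  have hfinal : ((m:ℝ) * ((m:ℝ) + 1 - (s:ℝ))) * (((m:ℝ) + 1 - (d:ℝ)) * (Q1 * Q2))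
      ≤ ((m:ℝ) * ((m:ℝ) + 1 - (s:ℝ))) * (((m:ℝ) + 1) * (P1 * P2)) := by
    rw [Eq]
    exact mul_le_mul_of_nonneg_right hcore (by positivity)
  exact le_of_mul_le_mul_left hfinal (by positivity)

lemma key2 (m d s t : ℕ) (hst1 : 1 ≤ s + t) (hst2 : s + t ≤ d) (hdm : d ≤ m) :
    ((m:ℝ) - (d:ℝ)) *
        ((∏ j ∈ Finset.range s, ((m:ℝ) - (j:ℝ))) *
          ∏ j ∈ Finset.range t, ((m:ℝ) - (j:ℝ)))
      ≤ (m:ℝ) *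
        ((∏ j ∈ Finset.range s, ((m:ℝ) + 1 - (j:ℝ))) *
          ∏ j ∈ Finset.range t, ((m:ℝ) - 1 - (j:ℝ))) := by
  obtain ⟨hP1, hP2, hQ1, hQ2, E1, E2⟩ := key_facts m d s t hst1 hst2 hdm
  set P1 := ∏ j ∈ Finset.range s, ((m:ℝ) - (j:ℝ))
  set P2 := ∏ j ∈ Finset.range t, ((m:ℝ) - (j:ℝ))
  set Q1 := ∏ j ∈ Finset.range s, ((m:ℝ) + 1 - (j:ℝ))
  set Q2 := ∏ j ∈ Finset.range t, ((m:ℝ) - 1 - (j:ℝ))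
  have hdr : (d:ℝ) ≤ (m:ℝ) := by exact_mod_cast hdm
  have hsr0 : (0:ℝ) ≤ (s:ℝ) := Nat.cast_nonneg s
  have hsr : (s:ℝ) ≤ (m:ℝ) := by
    have : s ≤ m := le_trans (Nat.le_add_right s t) (le_trans hst2 hdm)
    exact_mod_cast this
  have htdr : (t:ℝ) ≤ (d:ℝ) := by exact_mod_cast le_trans (Nat.le_add_left t s) hst2
  have hμ1s : (0:ℝ) < (m:ℝ) + 1 - (s:ℝ) := by linarith
  have hμd : (0:ℝ) ≤ (m:ℝ) - (d:ℝ) := by linarith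
  have hcore2 : ((m:ℝ) + 1 - (s:ℝ)) * ((m:ℝ) - (d:ℝ)) ≤ ((m:ℝ) + 1) * ((m:ℝ) - (t:ℝ)) := by
    have h1 : ((m:ℝ) + 1 - (s:ℝ)) * ((m:ℝ) - (d:ℝ)) ≤ ((m:ℝ) + 1) * ((m:ℝ) - (d:ℝ)) :=
      mul_le_mul_of_nonneg_right (by linarith) hμd
    have h2 : ((m:ℝ) + 1) * ((m:ℝ) - (d:ℝ)) ≤ ((m:ℝ) + 1) * ((m:ℝ) - (t:ℝ)) :=
      mul_le_mul_of_nonneg_left (by linarith) (by linarith)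
    linarith
  have Eq2 : ((m:ℝ) + 1 - (s:ℝ)) * ((m:ℝ) * (Q1 * Q2))
      = (((m:ℝ) + 1) * ((m:ℝ) - (t:ℝ))) * (P1 * P2) := by
    linear_combination ((m:ℝ) * Q2) * E1 + (((m:ℝ) + 1) * P1) * E2
  have hfin2 : ((m:ℝ) + 1 - (s:ℝ)) * (((m:ℝ) - (d:ℝ)) * (P1 * P2))
      ≤ ((m:ℝ) + 1 - (s:ℝ)) * ((m:ℝ) * (Q1 * Q2)) := by
    rw [Eq2]
    nlinarith [mul_le_mul_of_nonneg_right hcore2 (le_of_lt (mul_pos hP1 hP2))]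
  exact le_of_mul_le_mul_left hfin2 hμ1s

/-- lower bound for the Majority function. If `p` and `q` are degree-≤-d
univariate symmetrizations of nonnegative-coefficient polynomials (sums over pairs
(S,T) with 1 ≤ |S|+|T| ≤ d of nonnegative coefficients times
γ_{S,T}·k(k-1)···(k-|S|+1)·(N-k)···(N-k-|T|+1)), with q(N/2), q(N/2+1) > 0,
0 ≤ p(N/2) ≤ ε·q(N/2) and (1-ε)·q(N/2+1) ≤ p(N/2+1), then
d ≥ ((N+1) - sqrt((ε/(1-ε))(N²+2N)+1))/2; in particular d ≥ N/8 for ε = 1/3. -/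
theorem stmt7 (N d : ℕ) (hN : Even N) (ε : ℝ) (hε0 : 0 < ε) (hε1 : ε < 1 / 2)
    (a b : Finset (Fin N) × Finset (Fin N) → ℝ)
    (ha : ∀ st, 0 ≤ a st) (hb : ∀ st, 0 ≤ b st)
    (p q : ℝ → ℝ)
    (hp : ∀ k : ℝ, p k = ∑ st ∈ Finset.univ.filter
        (fun st : Finset (Fin N) × Finset (Fin N) =>
          1 ≤ st.1.card + st.2.card ∧ st.1.card + st.2.card ≤ d),
      a st * (((N - st.1.card - st.2.card).factorial : ℝ) / (N.factorial : ℝ))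
        * (∏ j ∈ Finset.range st.1.card, (k - (j : ℝ)))
        * (∏ j ∈ Finset.range st.2.card, ((N : ℝ) - k - (j : ℝ))))
    (hq : ∀ k : ℝ, q k = ∑ st ∈ Finset.univ.filter
        (fun st : Finset (Fin N) × Finset (Fin N) =>
          1 ≤ st.1.card + st.2.card ∧ st.1.card + st.2.card ≤ d),
      b st * (((N - st.1.card - st.2.card).factorial : ℝ) / (N.factorial : ℝ))
        * (∏ j ∈ Finset.range st.1.card, (k - (j : ℝ)))
        * (∏ j ∈ Finset.range st.2.card, ((N : ℝ) - k - (j : ℝ))))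
    (hq1 : 0 < q ((N : ℝ) / 2)) (hq2 : 0 < q ((N : ℝ) / 2 + 1))
    (hp1 : 0 ≤ p ((N : ℝ) / 2)) (hp2 : p ((N : ℝ) / 2) ≤ ε * q ((N : ℝ) / 2))
    (hp3 : (1 - ε) * q ((N : ℝ) / 2 + 1) ≤ p ((N : ℝ) / 2 + 1)) :
    (d : ℝ) ≥ (((N : ℝ) + 1) - Real.sqrt (ε / (1 - ε) * ((N : ℝ) ^ 2 + 2 * N) + 1)) / 2
    ∧ (ε = 1 / 3 → (d : ℝ) ≥ (N : ℝ) / 8) := by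
  obtain ⟨m, hm⟩ := hN
  have hε' : (0:ℝ) < 1 - ε := by linarith
  have hNμ : (N:ℝ) = 2 * (m:ℝ) := by rw [hm]; push_cast; ring
  have e1 : (N:ℝ) / 2 = (m:ℝ) := by rw [hNμ]; ring
  have hX1 : (1:ℝ) ≤ ε / (1 - ε) * ((N : ℝ) ^ 2 + 2 * N) + 1 := by
    have h0 : (0:ℝ) ≤ ε / (1 - ε) * ((N : ℝ) ^ 2 + 2 * N) := by positivity
    linarith
  have hsqrt1 : (1:ℝ) ≤ Real.sqrt (ε / (1 - ε) * ((N : ℝ) ^ 2 + 2 * N) + 1) := by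
    have := Real.sqrt_le_sqrt hX1
    rwa [Real.sqrt_one] at this
  have G1 : (d : ℝ) ≥ (((N : ℝ) + 1) - Real.sqrt (ε / (1 - ε) * ((N : ℝ) ^ 2 + 2 * N) + 1)) / 2 := by
    by_cases hdm : d ≤ m
    · -- main case
      set F := Finset.univ.filter
        (fun st : Finset (Fin N) × Finset (Fin N) =>
          1 ≤ st.1.card + st.2.card ∧ st.1.card + st.2.card ≤ d) with hF
      have hpm : p ((N:ℝ)/2) = ∑ st ∈ F,
          a st * (((N - st.1.card - st.2.card).factorial : ℝ) / (N.factorial : ℝ))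
            * (∏ j ∈ Finset.range st.1.card, ((m:ℝ) - (j:ℝ)))
            * (∏ j ∈ Finset.range st.2.card, ((m:ℝ) - (j:ℝ))) := by
        rw [hp]
        refine Finset.sum_congr rfl fun st _ => ?_
        rw [show ∏ j ∈ Finset.range st.1.card, ((N:ℝ)/2 - (j:ℝ))
              = ∏ j ∈ Finset.range st.1.card, ((m:ℝ) - (j:ℝ)) from
            Finset.prod_congr rfl fun j _ => by rw [e1],
          show ∏ j ∈ Finset.range st.2.card, ((N:ℝ) - (N:ℝ)/2 - (j:ℝ))
              = ∏ j ∈ Finset.range st.2.card, ((m:ℝ) - (j:ℝ)) from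
            Finset.prod_congr rfl fun j _ => by rw [hNμ]; ring]
      have hpm1 : p ((N:ℝ)/2 + 1) = ∑ st ∈ F,
          a st * (((N - st.1.card - st.2.card).factorial : ℝ) / (N.factorial : ℝ))
            * (∏ j ∈ Finset.range st.1.card, ((m:ℝ) + 1 - (j:ℝ)))
            * (∏ j ∈ Finset.range st.2.card, ((m:ℝ) - 1 - (j:ℝ))) := by
        rw [hp]
        refine Finset.sum_congr rfl fun st _ => ?_
        rw [show ∏ j ∈ Finset.range st.1.card, ((N:ℝ)/2 + 1 - (j:ℝ))
              = ∏ j ∈ Finset.range st.1.card, ((m:ℝ) + 1 - (j:ℝ)) from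
            Finset.prod_congr rfl fun j _ => by rw [e1],
          show ∏ j ∈ Finset.range st.2.card, ((N:ℝ) - ((N:ℝ)/2 + 1) - (j:ℝ))
              = ∏ j ∈ Finset.range st.2.card, ((m:ℝ) - 1 - (j:ℝ)) from
            Finset.prod_congr rfl fun j _ => by rw [hNμ]; ring]
      have hqm : q ((N:ℝ)/2) = ∑ st ∈ F,
          b st * (((N - st.1.card - st.2.card).factorial : ℝ) / (N.factorial : ℝ))
            * (∏ j ∈ Finset.range st.1.card, ((m:ℝ) - (j:ℝ)))
            * (∏ j ∈ Finset.range st.2.card, ((m:ℝ) - (j:ℝ))) := by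
        rw [hq]
        refine Finset.sum_congr rfl fun st _ => ?_
        rw [show ∏ j ∈ Finset.range st.1.card, ((N:ℝ)/2 - (j:ℝ))
              = ∏ j ∈ Finset.range st.1.card, ((m:ℝ) - (j:ℝ)) from
            Finset.prod_congr rfl fun j _ => by rw [e1],
          show ∏ j ∈ Finset.range st.2.card, ((N:ℝ) - (N:ℝ)/2 - (j:ℝ))
              = ∏ j ∈ Finset.range st.2.card, ((m:ℝ) - (j:ℝ)) from
            Finset.prod_congr rfl fun j _ => by rw [hNμ]; ring]
      have hqm1 : q ((N:ℝ)/2 + 1) = ∑ st ∈ F,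
          b st * (((N - st.1.card - st.2.card).factorial : ℝ) / (N.factorial : ℝ))
            * (∏ j ∈ Finset.range st.1.card, ((m:ℝ) + 1 - (j:ℝ)))
            * (∏ j ∈ Finset.range st.2.card, ((m:ℝ) - 1 - (j:ℝ))) := by
        rw [hq]
        refine Finset.sum_congr rfl fun st _ => ?_
        rw [show ∏ j ∈ Finset.range st.1.card, ((N:ℝ)/2 + 1 - (j:ℝ))
              = ∏ j ∈ Finset.range st.1.card, ((m:ℝ) + 1 - (j:ℝ)) from
            Finset.prod_congr rfl fun j _ => by rw [e1],
          show ∏ j ∈ Finset.range st.2.card, ((N:ℝ) - ((N:ℝ)/2 + 1) - (j:ℝ))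
              = ∏ j ∈ Finset.range st.2.card, ((m:ℝ) - 1 - (j:ℝ)) from
            Finset.prod_congr rfl fun j _ => by rw [hNμ]; ring]
      have Hp : ((m:ℝ) + 1 - (d:ℝ)) * p ((N:ℝ)/2 + 1) ≤ ((m:ℝ) + 1) * p ((N:ℝ)/2) := by
        rw [hpm, hpm1, Finset.mul_sum, Finset.mul_sum]
        refine Finset.sum_le_sum fun st hst => ?_
        obtain ⟨h1, h2⟩ := (Finset.mem_filter.mp hst).2
        have hγ : (0:ℝ) ≤ ((N - st.1.card - st.2.card).factorial : ℝ) / (N.factorial : ℝ) := by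
          positivity
        have hc : 0 ≤ a st * (((N - st.1.card - st.2.card).factorial : ℝ) / (N.factorial : ℝ)) :=
          mul_nonneg (ha st) hγ
        have hk := key1 m d st.1.card st.2.card h1 h2 hdm
        nlinarith [mul_le_mul_of_nonneg_left hk hc]
      have Hq : ((m:ℝ) - (d:ℝ)) * q ((N:ℝ)/2) ≤ (m:ℝ) * q ((N:ℝ)/2 + 1) := by
        rw [hqm, hqm1, Finset.mul_sum, Finset.mul_sum]
        refine Finset.sum_le_sum fun st hst => ?_
        obtain ⟨h1, h2⟩ := (Finset.mem_filter.mp hst).2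
        have hγ : (0:ℝ) ≤ ((N - st.1.card - st.2.card).factorial : ℝ) / (N.factorial : ℝ) := by
          positivity
        have hc : 0 ≤ b st * (((N - st.1.card - st.2.card).factorial : ℝ) / (N.factorial : ℝ)) :=
          mul_nonneg (hb st) hγ
        have hk := key2 m d st.1.card st.2.card h1 h2 hdm
        nlinarith [mul_le_mul_of_nonneg_left hk hc]
      have hdr : (d:ℝ) ≤ (m:ℝ) := by exact_mod_cast hdm
      have hA : (1 - ε) * ((m:ℝ) + 1 - (d:ℝ)) * q ((N:ℝ)/2 + 1)
          ≤ ε * ((m:ℝ) + 1) * q ((N:ℝ)/2) := by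
        have t1 := mul_le_mul_of_nonneg_left hp3 (by linarith : (0:ℝ) ≤ (m:ℝ) + 1 - (d:ℝ))
        have t2 := mul_le_mul_of_nonneg_left hp2 (by positivity : (0:ℝ) ≤ (m:ℝ) + 1)
        nlinarith [t1, t2, Hp]
      have hB := mul_le_mul_of_nonneg_left Hq
        (by nlinarith : (0:ℝ) ≤ (1 - ε) * ((m:ℝ) + 1 - (d:ℝ)))
      have hC := mul_le_mul_of_nonneg_left hA (by positivity : (0:ℝ) ≤ (m:ℝ))
      have hD : ((1 - ε) * (((m:ℝ) - (d:ℝ)) * ((m:ℝ) + 1 - (d:ℝ)))) * q ((N:ℝ)/2)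
          ≤ (ε * ((m:ℝ) * ((m:ℝ) + 1))) * q ((N:ℝ)/2) := by nlinarith [hB, hC]
      have hfin : (1 - ε) * (((m:ℝ) - (d:ℝ)) * ((m:ℝ) + 1 - (d:ℝ)))
          ≤ ε * ((m:ℝ) * ((m:ℝ) + 1)) := le_of_mul_le_mul_right hD hq1
      -- turn into sqrt bound
      have h5 : ((((N:ℝ) + 1 - 2 * (d:ℝ)))^2 - 1) * (1 - ε) ≤ ε * ((N:ℝ)^2 + 2 * N) := by
        rw [hNμ]; nlinarith [hfin]
      have hsq : ((N:ℝ) + 1 - 2 * (d:ℝ))^2 ≤ ε / (1 - ε) * ((N : ℝ) ^ 2 + 2 * N) + 1 := by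
        rw [div_mul_eq_mul_div, ← sub_le_iff_le_add, le_div_iff₀ hε']
        exact h5
      have hy : (0:ℝ) ≤ (N:ℝ) + 1 - 2 * (d:ℝ) := by rw [hNμ]; linarith
      have hsqrt : (N:ℝ) + 1 - 2 * (d:ℝ)
          ≤ Real.sqrt (ε / (1 - ε) * ((N : ℝ) ^ 2 + 2 * N) + 1) := by
        have h6 := Real.sqrt_le_sqrt hsq
        rwa [Real.sqrt_sq hy] at h6
      linarith
    · have hmd : (m:ℝ) < (d:ℝ) := by exact_mod_cast Nat.lt_of_not_le hdm
      linarith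
  refine ⟨G1, fun hε3 => ?_⟩
  subst hε3
  have h1 : (1/3:ℝ) / (1 - 1/3) * ((N : ℝ) ^ 2 + 2 * N) + 1 ≤ (3 * (N:ℝ) / 4 + 1)^2 := by
    nlinarith [sq_nonneg (N:ℝ)]
  have h2 : Real.sqrt ((1/3:ℝ) / (1 - 1/3) * ((N : ℝ) ^ 2 + 2 * N) + 1) ≤ 3 * (N:ℝ) / 4 + 1 := by
    have h3 := Real.sqrt_le_sqrt h1
    rwa [Real.sqrt_sq (by positivity)] at h3
  linarith [G1, h2]
end

section
/- Any rational function P/Q with nonnegative coefficients (as polynomials in the 2N variables x_1,...,x_N, 1−x_1,...,1−x_N, with Q strictly positive on {0,1}^N) that approximates the N-bit Majority function up to error 1/3 on every input must have degree at least N/8. -/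
open Finset

namespace Stmt8Aux

variable {N : ℕ}

/-- the boolean input corresponding to a subset -/
def xA (A : Finset (Fin N)) : Fin N → Bool := fun i => decide (i ∈ A)

/-- value of the monomial indexed by (S,T) at the input x_A -/
noncomputable def m (S T A : Finset (Fin N)) : ℝ :=
  if S ⊆ A ∧ Disjoint T A then 1 else 0

lemma m_nonneg (S T A : Finset (Fin N)) : 0 ≤ m S T A := by
  unfold m; split <;> norm_num

lemma prod_one (S A : Finset (Fin N)) :
    (∏ i ∈ S, if xA A i then (1:ℝ) else 0) = if S ⊆ A then 1 else 0 := by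
  by_cases h : S ⊆ A
  · rw [if_pos h]
    apply Finset.prod_eq_one
    intro i hi
    simp [xA, h hi]
  · rw [if_neg h]
    obtain ⟨i, hiS, hiA⟩ := Finset.not_subset.mp h
    refine Finset.prod_eq_zero hiS ?_
    simp [xA, hiA]

lemma prod_zero (T A : Finset (Fin N)) :
    (∏ j ∈ T, if xA A j then (0:ℝ) else 1) = if Disjoint T A then 1 else 0 := by
  by_cases h : Disjoint T A
  · rw [if_pos h]
    apply Finset.prod_eq_one
    intro j hj
    have : j ∉ A := Finset.disjoint_left.mp h hj
    simp [xA, this]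
  · rw [if_neg h]
    obtain ⟨j, hjT, hjA⟩ := Finset.not_disjoint_iff.mp h
    refine Finset.prod_eq_zero hjT ?_
    simp [xA, hjA]

lemma mono_eq (S T A : Finset (Fin N)) :
    (∏ i ∈ S, if xA A i then (1:ℝ) else 0) * (∏ j ∈ T, if xA A j then (0:ℝ) else 1)
      = m S T A := by
  rw [prod_one, prod_zero, m]
  by_cases h1 : S ⊆ A <;> by_cases h2 : Disjoint T A <;> simp [h1, h2]

lemma m_down {d : ℕ} {S T : Finset (Fin N)} (hST : S.card + T.card ≤ d)
    (A : Finset (Fin N)) :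
    ((A.card : ℝ) - d) * m S T A ≤ ∑ i ∈ A, m S T (A.erase i) := by
  have hRnn : (0:ℝ) ≤ ∑ i ∈ A, m S T (A.erase i) :=
    Finset.sum_nonneg fun i _ => m_nonneg _ _ _
  by_cases hm : S ⊆ A ∧ Disjoint T A
  · rw [m, if_pos hm, mul_one]
    have hsub : A \ S ⊆ A := Finset.sdiff_subset
    have h1 : ∑ i ∈ A \ S, m S T (A.erase i) ≤ ∑ i ∈ A, m S T (A.erase i) :=
      Finset.sum_le_sum_of_subset_of_nonneg hsub (fun i _ _ => m_nonneg _ _ _)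
    have h2 : ∑ i ∈ A \ S, m S T (A.erase i) = ((A \ S).card : ℝ) := by
      have hone : ∀ i ∈ A \ S, m S T (A.erase i) = 1 := by
        intro i hi
        obtain ⟨hiA, hiS⟩ := Finset.mem_sdiff.mp hi
        rw [m, if_pos]
        exact ⟨Finset.subset_erase.mpr ⟨hm.1, hiS⟩,
          hm.2.mono_right (Finset.erase_subset _ _)⟩
      rw [Finset.sum_congr rfl hone, Finset.sum_const, nsmul_eq_mul, mul_one]
    have hcard : ((A.card : ℝ) - d) ≤ ((A \ S).card : ℝ) := by
      rw [Finset.card_sdiff_of_subset hm.1]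
      have hSd : S.card ≤ d := le_trans (Nat.le_add_right _ _) hST
      have hSA : S.card ≤ A.card := Finset.card_le_card hm.1
      rw [Nat.cast_sub hSA]
      have : (S.card : ℝ) ≤ d := by exact_mod_cast hSd
      linarith
    calc ((A.card : ℝ) - d) ≤ ((A \ S).card : ℝ) := hcard
      _ = ∑ i ∈ A \ S, m S T (A.erase i) := h2.symm
      _ ≤ _ := h1
  · rw [m, if_neg hm, mul_zero]
    exact hRnn

lemma m_up {d : ℕ} {S T : Finset (Fin N)} (hST : S.card + T.card ≤ d)
    (B : Finset (Fin N)) :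
    ((Bᶜ.card : ℝ) - d) * m S T B ≤ ∑ j ∈ Bᶜ, m S T (insert j B) := by
  have hRnn : (0:ℝ) ≤ ∑ j ∈ Bᶜ, m S T (insert j B) :=
    Finset.sum_nonneg fun j _ => m_nonneg _ _ _
  by_cases hm : S ⊆ B ∧ Disjoint T B
  · rw [m, if_pos hm, mul_one]
    have hsub : Bᶜ \ T ⊆ Bᶜ := Finset.sdiff_subset
    have h1 : ∑ j ∈ Bᶜ \ T, m S T (insert j B) ≤ ∑ j ∈ Bᶜ, m S T (insert j B) :=
      Finset.sum_le_sum_of_subset_of_nonneg hsub (fun j _ _ => m_nonneg _ _ _)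
    have h2 : ∑ j ∈ Bᶜ \ T, m S T (insert j B) = ((Bᶜ \ T).card : ℝ) := by
      have hone : ∀ j ∈ Bᶜ \ T, m S T (insert j B) = 1 := by
        intro j hj
        obtain ⟨hjB, hjT⟩ := Finset.mem_sdiff.mp hj
        rw [m, if_pos]
        refine ⟨hm.1.trans (Finset.subset_insert _ _), ?_⟩
        rw [Finset.disjoint_insert_right]
        exact ⟨hjT, hm.2⟩
      rw [Finset.sum_congr rfl hone, Finset.sum_const, nsmul_eq_mul, mul_one]
    have hcard : ((Bᶜ.card : ℝ) - d) ≤ ((Bᶜ \ T).card : ℝ) := by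
      have h3 : Bᶜ.card - T.card ≤ (Bᶜ \ T).card := Finset.le_card_sdiff T Bᶜ
      have hTd : T.card ≤ d := le_trans (Nat.le_add_left _ _) hST
      have h4 : ((Bᶜ.card : ℝ)) - T.card ≤ ((Bᶜ \ T).card : ℝ) := by
        by_cases hle : T.card ≤ Bᶜ.card
        · calc ((Bᶜ.card : ℝ)) - T.card = ((Bᶜ.card - T.card : ℕ) : ℝ) := by
                rw [Nat.cast_sub hle]
            _ ≤ _ := by exact_mod_cast h3
        · push_neg at hle
          have h5 : ((Bᶜ.card : ℝ)) < T.card := by exact_mod_cast hle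
          have h6 : (0:ℝ) ≤ ((Bᶜ \ T).card : ℝ) := by positivity
          linarith
      have : (T.card : ℝ) ≤ d := by exact_mod_cast hTd
      linarith
    calc ((Bᶜ.card : ℝ) - d) ≤ ((Bᶜ \ T).card : ℝ) := hcard
      _ = ∑ j ∈ Bᶜ \ T, m S T (insert j B) := h2.symm
      _ ≤ _ := h1
  · rw [m, if_neg hm, mul_zero]
    exact hRnn

lemma doubleCount (k : ℕ) (g : Finset (Fin N) → Fin N → ℝ) :
    ∑ A ∈ Finset.powersetCard (k+1) (Finset.univ : Finset (Fin N)), ∑ i ∈ A, g (A.erase i) i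
      = ∑ B ∈ Finset.powersetCard k (Finset.univ : Finset (Fin N)), ∑ j ∈ Bᶜ, g B j := by
  rw [← Finset.sum_sigma (Finset.powersetCard (k+1) (Finset.univ : Finset (Fin N)))
      (fun A => A) (fun p => g (p.1.erase p.2) p.2),
      ← Finset.sum_sigma (Finset.powersetCard k (Finset.univ : Finset (Fin N)))
      (fun B => Bᶜ) (fun p => g p.1 p.2)]
  apply Finset.sum_nbij' (fun p => ⟨p.1.erase p.2, p.2⟩) (fun p => ⟨insert p.2 p.1, p.2⟩)
  · rintro ⟨A, i⟩ hp
    simp only [Finset.mem_sigma, Finset.mem_powersetCard_univ] at hp ⊢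
    obtain ⟨hA, hi⟩ := hp
    constructor
    · rw [Finset.card_erase_of_mem hi, hA]; omega
    · simp
  · rintro ⟨B, j⟩ hp
    simp only [Finset.mem_sigma, Finset.mem_powersetCard_univ, Finset.mem_compl] at hp ⊢
    obtain ⟨hB, hj⟩ := hp
    constructor
    · rw [Finset.card_insert_of_notMem hj, hB]
    · exact Finset.mem_insert_self _ _
  · rintro ⟨A, i⟩ hp
    simp only [Finset.mem_sigma] at hp
    simp [Finset.insert_erase hp.2]
  · rintro ⟨B, j⟩ hp
    simp only [Finset.mem_sigma, Finset.mem_compl] at hp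
    simp [Finset.erase_insert hp.2]
  · rintro ⟨A, i⟩ hp
    rfl

/-- value of a nonnegative-coefficient polynomial of degree ≤ d at x_A -/
noncomputable def pv (a : Finset (Fin N) × Finset (Fin N) → ℝ) (d : ℕ)
    (A : Finset (Fin N)) : ℝ :=
  ∑ st ∈ Finset.univ.filter
      (fun st : Finset (Fin N) × Finset (Fin N) => st.1.card + st.2.card ≤ d),
    a st * m st.1 st.2 A

lemma pv_nonneg {a : Finset (Fin N) × Finset (Fin N) → ℝ} (ha : ∀ st, 0 ≤ a st)
    (d : ℕ) (A : Finset (Fin N)) : 0 ≤ pv a d A :=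
  Finset.sum_nonneg fun st _ => mul_nonneg (ha st) (m_nonneg _ _ _)

lemma pv_down {a : Finset (Fin N) × Finset (Fin N) → ℝ} (ha : ∀ st, 0 ≤ a st)
    (d : ℕ) (A : Finset (Fin N)) :
    ((A.card : ℝ) - d) * pv a d A ≤ ∑ i ∈ A, pv a d (A.erase i) := by
  unfold pv
  rw [Finset.mul_sum, Finset.sum_comm]
  apply Finset.sum_le_sum
  intro st hst
  have hd : st.1.card + st.2.card ≤ d := (Finset.mem_filter.mp hst).2
  rw [← Finset.mul_sum]
  have h1 := m_down hd A
  have h2 := mul_le_mul_of_nonneg_left h1 (ha st)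
  nlinarith [h2]

lemma pv_up {a : Finset (Fin N) × Finset (Fin N) → ℝ} (ha : ∀ st, 0 ≤ a st)
    (d : ℕ) (B : Finset (Fin N)) :
    ((Bᶜ.card : ℝ) - d) * pv a d B ≤ ∑ j ∈ Bᶜ, pv a d (insert j B) := by
  unfold pv
  rw [Finset.mul_sum, Finset.sum_comm]
  apply Finset.sum_le_sum
  intro st hst
  have hd : st.1.card + st.2.card ≤ d := (Finset.mem_filter.mp hst).2
  rw [← Finset.mul_sum]
  have h1 := m_up hd B
  have h2 := mul_le_mul_of_nonneg_left h1 (ha st)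
  nlinarith [h2]

lemma sum_down {a : Finset (Fin N) × Finset (Fin N) → ℝ} (ha : ∀ st, 0 ≤ a st)
    (d k : ℕ) :
    ((k : ℝ)+1-d) * ∑ A ∈ Finset.powersetCard (k+1) (Finset.univ : Finset (Fin N)), pv a d A
      ≤ ((N : ℝ) - k) * ∑ B ∈ Finset.powersetCard k (Finset.univ : Finset (Fin N)), pv a d B := by
  by_cases hk : k ≤ N
  · have step1 : ((k : ℝ)+1-d) * ∑ A ∈ Finset.powersetCard (k+1) (Finset.univ : Finset (Fin N)), pv a d A
        ≤ ∑ A ∈ Finset.powersetCard (k+1) (Finset.univ : Finset (Fin N)), ∑ i ∈ A, pv a d (A.erase i) := by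
      rw [Finset.mul_sum]
      apply Finset.sum_le_sum
      intro A hA
      have hAc : A.card = k + 1 := (Finset.mem_powersetCard_univ.mp hA)
      have := pv_down ha d A
      rw [hAc] at this
      calc ((k : ℝ)+1-d) * pv a d A = ((((k+1 : ℕ)) : ℝ) - d) * pv a d A := by push_cast; ring
        _ ≤ _ := this
    have step2 : ∑ A ∈ Finset.powersetCard (k+1) (Finset.univ : Finset (Fin N)), ∑ i ∈ A, pv a d (A.erase i)
        = ∑ B ∈ Finset.powersetCard k (Finset.univ : Finset (Fin N)), ∑ j ∈ Bᶜ, pv a d B :=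
      doubleCount k (fun B _ => pv a d B)
    have step3 : ∑ B ∈ Finset.powersetCard k (Finset.univ : Finset (Fin N)), ∑ j ∈ Bᶜ, pv a d B
        = ((N : ℝ) - k) * ∑ B ∈ Finset.powersetCard k (Finset.univ : Finset (Fin N)), pv a d B := by
      rw [Finset.mul_sum]
      apply Finset.sum_congr rfl
      intro B hB
      have hBc : B.card = k := Finset.mem_powersetCard_univ.mp hB
      rw [Finset.sum_const, nsmul_eq_mul, Finset.card_compl, hBc, Fintype.card_fin,
        Nat.cast_sub hk]
    linarith [step1, step2 ▸ step1, step3]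
  · push_neg at hk
    have h1 : Finset.powersetCard (k+1) (Finset.univ : Finset (Fin N)) = ∅ := by
      rw [Finset.powersetCard_eq_empty]
      simp only [Finset.card_univ, Fintype.card_fin]
      omega
    have h2 : Finset.powersetCard k (Finset.univ : Finset (Fin N)) = ∅ := by
      rw [Finset.powersetCard_eq_empty]
      simp only [Finset.card_univ, Fintype.card_fin]
      omega
    simp [h1, h2]

lemma sum_up {a : Finset (Fin N) × Finset (Fin N) → ℝ} (ha : ∀ st, 0 ≤ a st)
    (d k : ℕ) (hk : k ≤ N) :
    ((N : ℝ) - k - d) * ∑ B ∈ Finset.powersetCard k (Finset.univ : Finset (Fin N)), pv a d B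
      ≤ ((k : ℝ)+1) * ∑ A ∈ Finset.powersetCard (k+1) (Finset.univ : Finset (Fin N)), pv a d A := by
  have step1 : ((N : ℝ) - k - d) * ∑ B ∈ Finset.powersetCard k (Finset.univ : Finset (Fin N)), pv a d B
      ≤ ∑ B ∈ Finset.powersetCard k (Finset.univ : Finset (Fin N)), ∑ j ∈ Bᶜ, pv a d (insert j B) := by
    rw [Finset.mul_sum]
    apply Finset.sum_le_sum
    intro B hB
    have hBc : B.card = k := Finset.mem_powersetCard_univ.mp hB
    have := pv_up ha d B
    have hBcc : (Bᶜ.card : ℝ) = (N : ℝ) - k := by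
      rw [Finset.card_compl, hBc, Fintype.card_fin, Nat.cast_sub hk]
    rw [hBcc] at this
    exact this
  have step2 : ∑ B ∈ Finset.powersetCard k (Finset.univ : Finset (Fin N)), ∑ j ∈ Bᶜ, pv a d (insert j B)
      = ∑ A ∈ Finset.powersetCard (k+1) (Finset.univ : Finset (Fin N)), ∑ i ∈ A, pv a d A := by
    rw [← doubleCount k (fun B j => pv a d (insert j B))]
    apply Finset.sum_congr rfl
    intro A hA
    apply Finset.sum_congr rfl
    intro i hi
    rw [Finset.insert_erase hi]
  have step3 : ∑ A ∈ Finset.powersetCard (k+1) (Finset.univ : Finset (Fin N)), ∑ i ∈ A, pv a d A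
      = ((k : ℝ)+1) * ∑ A ∈ Finset.powersetCard (k+1) (Finset.univ : Finset (Fin N)), pv a d A := by
    rw [Finset.mul_sum]
    apply Finset.sum_congr rfl
    intro A hA
    have hAc : A.card = k + 1 := Finset.mem_powersetCard_univ.mp hA
    rw [Finset.sum_const, hAc, nsmul_eq_mul]
    push_cast
    ring
  linarith [step1, step2 ▸ step1, step3]

end Stmt8Aux


open Stmt8Aux

/-- any rational function P/Q of degree at most d with nonnegative
coefficients (in the 2N variables x_i, 1-x_i) with Q > 0 on {0,1}^N that approximates
the N-bit Majority function up to error 1/3 on every input satisfies d ≥ N/8. -/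
theorem stmt8 (N d : ℕ) (hN : Even N)
    (a b : Finset (Fin N) × Finset (Fin N) → ℝ)
    (ha : ∀ st, 0 ≤ a st) (hb : ∀ st, 0 ≤ b st)
    (P Q : (Fin N → Bool) → ℝ)
    (hP : ∀ x, P x = ∑ st ∈ Finset.univ.filter
        (fun st : Finset (Fin N) × Finset (Fin N) => st.1.card + st.2.card ≤ d),
      a st * (∏ i ∈ st.1, if x i then (1 : ℝ) else 0)
        * ∏ j ∈ st.2, if x j then (0 : ℝ) else 1)
    (hQ : ∀ x, Q x = ∑ st ∈ Finset.univ.filter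
        (fun st : Finset (Fin N) × Finset (Fin N) => st.1.card + st.2.card ≤ d),
      b st * (∏ i ∈ st.1, if x i then (1 : ℝ) else 0)
        * ∏ j ∈ st.2, if x j then (0 : ℝ) else 1)
    (hQpos : ∀ x, 0 < Q x)
    (happrox : ∀ x : Fin N → Bool,
      |P x / Q x - (if N / 2 < (Finset.univ.filter (fun i => x i = true)).card
          then (1 : ℝ) else 0)| ≤ 1 / 3) :
    (N : ℝ) / 8 ≤ (d : ℝ) := by
  by_cases hN0 : N = 0
  · rw [hN0]
    norm_num
  obtain ⟨n, hn⟩ := hN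
  have hn1 : 1 ≤ n := by omega
  have hPval : ∀ A : Finset (Fin N), P (xA A) = pv a d A := by
    intro A
    rw [hP]
    apply Finset.sum_congr rfl
    intro st _
    rw [mul_assoc, mono_eq]
  have hQval : ∀ A : Finset (Fin N), Q (xA A) = pv b d A := by
    intro A
    rw [hQ]
    apply Finset.sum_congr rfl
    intro st _
    rw [mul_assoc, mono_eq]
  have hwt : ∀ A : Finset (Fin N),
      (Finset.univ.filter (fun i => xA A i = true)) = A := by
    intro A; ext i; simp [xA]
  have hhalf : N / 2 = n := by omega
  have hPn : ∀ A : Finset (Fin N), A.card = n → 3 * pv a d A ≤ pv b d A := by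
    intro A hA
    have h := happrox (xA A)
    rw [hwt A, hA, hhalf, if_neg (lt_irrefl n)] at h
    rw [abs_le] at h
    have hq := hQpos (xA A)
    have h1 : P (xA A) / Q (xA A) ≤ 1/3 := by linarith [h.2]
    rw [div_le_iff₀ hq] at h1
    rw [← hPval A, ← hQval A]
    linarith
  have hPn1 : ∀ A : Finset (Fin N), A.card = n + 1 → 2 * pv b d A ≤ 3 * pv a d A := by
    intro A hA
    have h := happrox (xA A)
    rw [hwt A, hA, hhalf, if_pos (Nat.lt_succ_self n)] at h
    rw [abs_le] at h
    have hq := hQpos (xA A)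
    have h1 : (2:ℝ)/3 ≤ P (xA A) / Q (xA A) := by linarith [h.1]
    rw [le_div_iff₀ hq] at h1
    rw [← hPval A, ← hQval A]
    linarith
  set F0 := ∑ B ∈ Finset.powersetCard n (Finset.univ : Finset (Fin N)), pv a d B with hF0
  set F1 := ∑ A ∈ Finset.powersetCard (n+1) (Finset.univ : Finset (Fin N)), pv a d A with hF1
  set G0 := ∑ B ∈ Finset.powersetCard n (Finset.univ : Finset (Fin N)), pv b d B with hG0
  set G1 := ∑ A ∈ Finset.powersetCard (n+1) (Finset.univ : Finset (Fin N)), pv b d A with hG1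
  have hDown := sum_down ha d n
  have hUp := sum_up hb d n (by omega)
  have h30 : 3 * F0 ≤ G0 := by
    rw [hF0, hG0, Finset.mul_sum]
    apply Finset.sum_le_sum
    intro B hB
    exact hPn B (Finset.mem_powersetCard_univ.mp hB)
  have h21 : 2 * G1 ≤ 3 * F1 := by
    rw [hF1, hG1, Finset.mul_sum, Finset.mul_sum]
    apply Finset.sum_le_sum
    intro A hA
    exact hPn1 A (Finset.mem_powersetCard_univ.mp hA)
  have hG1pos : 0 < G1 := by
    rw [hG1]
    apply Finset.sum_pos
    · intro A _
      rw [← hQval A]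
      exact hQpos _
    · apply Finset.powersetCard_nonempty_of_le
      simp only [Finset.card_univ, Fintype.card_fin]
      omega
  have hF0nn : 0 ≤ F0 := Finset.sum_nonneg fun B _ => pv_nonneg ha d B
  have hF1nn : 0 ≤ F1 := Finset.sum_nonneg fun A _ => pv_nonneg ha d A
  have hG0nn : 0 ≤ G0 := Finset.sum_nonneg fun B _ => pv_nonneg hb d B
  by_contra hcon
  push_neg at hcon
  set δ := (d:ℝ) with hδdef
  set μ := (n:ℝ) with hμdef
  have hμ1 : (1:ℝ) ≤ μ := by rw [hμdef]; exact_mod_cast hn1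
  have hδnn : (0:ℝ) ≤ δ := Nat.cast_nonneg d
  have hNr : (N:ℝ) = μ + μ := by rw [hn]; push_cast; ring
  have hδlt : δ < μ/4 := by
    rw [hNr] at hcon
    linarith
  have hDown' : (μ+1-δ)*F1 ≤ μ*F0 := by
    rw [hNr] at hDown
    calc (μ+1-δ)*F1 = ((μ:ℝ)+1-δ) * F1 := by ring
      _ ≤ (μ + μ - μ) * F0 := by linarith [hDown]
      _ = μ * F0 := by ring
  have hUp' : (μ-δ)*G0 ≤ (μ+1)*G1 := by
    rw [hNr] at hUp
    calc (μ-δ)*G0 = (μ + μ - μ - δ) * G0 := by ring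
      _ ≤ (μ+1)*G1 := hUp
  have hpos1 : (0:ℝ) ≤ μ + 1 - δ := by linarith
  have hpos2 : (0:ℝ) ≤ μ - δ := by linarith
  have h5 : 2*(μ+1-δ)*G1 ≤ μ*G0 := by
    calc 2*(μ+1-δ)*G1 = (μ+1-δ)*(2*G1) := by ring
      _ ≤ (μ+1-δ)*(3*F1) := mul_le_mul_of_nonneg_left h21 hpos1
      _ = 3*((μ+1-δ)*F1) := by ring
      _ ≤ 3*(μ*F0) := by linarith [hDown']
      _ = μ*(3*F0) := by ring
      _ ≤ μ*G0 := mul_le_mul_of_nonneg_left h30 (by linarith)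
  have h6 : (2*(μ-δ)*(μ+1-δ))*G1 ≤ (μ*(μ+1))*G1 := by
    calc (2*(μ-δ)*(μ+1-δ))*G1 = (μ-δ)*(2*(μ+1-δ)*G1) := by ring
      _ ≤ (μ-δ)*(μ*G0) := mul_le_mul_of_nonneg_left h5 hpos2
      _ = μ*((μ-δ)*G0) := by ring
      _ ≤ μ*((μ+1)*G1) := mul_le_mul_of_nonneg_left hUp' (by linarith)
      _ = (μ*(μ+1))*G1 := by ring
  have h7 : 2*(μ-δ)*(μ+1-δ) ≤ μ*(μ+1) := le_of_mul_le_mul_right h6 hG1pos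
  have hprod : δ*(2*μ+1) < (μ/4)*(2*μ+1) :=
    mul_lt_mul_of_pos_right hδlt (by linarith)
  nlinarith [h7, hprod, sq_nonneg δ, hμ1]
end

section
/- Let N be even, k an integer with N/2 + 1 ≤ k ≤ N, and r = 1/(2·C(N, N/2+1)). Define p₁ = a/(a + (1−a)·r) where a = C(k, N/2+1)/C(N, N/2+1). Then p₁ ≥ 2/3. Moreover, if k ≤ N/2 then C(k, N/2+1) = 0 and hence a = 0. -/
/-- correctness of the (N/2+1)-query post-selected algorithm for Majority.
With a = C(k,N/2+1)/C(N,N/2+1) and r = 1/(2·C(N,N/2+1)), for N/2+1 ≤ k ≤ N we have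
a/(a+(1-a)r) ≥ 2/3; moreover C(k',N/2+1) = 0 whenever k' ≤ N/2. -/
theorem stmt9 (N k : ℕ) (hN : Even N) (hk1 : N / 2 + 1 ≤ k) (hk2 : k ≤ N) :
    ((Nat.choose k (N / 2 + 1) : ℝ) / (Nat.choose N (N / 2 + 1) : ℝ)) /
        (((Nat.choose k (N / 2 + 1) : ℝ) / (Nat.choose N (N / 2 + 1) : ℝ))
          + (1 - (Nat.choose k (N / 2 + 1) : ℝ) / (Nat.choose N (N / 2 + 1) : ℝ))
            * (1 / (2 * (Nat.choose N (N / 2 + 1) : ℝ)))) ≥ 2 / 3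
    ∧ ∀ k' : ℕ, k' ≤ N / 2 → Nat.choose k' (N / 2 + 1) = 0 := by
  have hm : N / 2 + 1 ≤ N := le_trans hk1 hk2
  have hbn : 1 ≤ k.choose (N / 2 + 1) := (Nat.choose_pos hk1)
  have hcn : k.choose (N / 2 + 1) ≤ N.choose (N / 2 + 1) := Nat.choose_le_choose _ hk2
  set b : ℝ := (k.choose (N / 2 + 1) : ℝ) with hbdef
  set c : ℝ := (N.choose (N / 2 + 1) : ℝ) with hcdef
  have hb : (1 : ℝ) ≤ b := by rw [hbdef]; exact_mod_cast hbn
  have hbc : b ≤ c := by rw [hbdef, hcdef]; exact_mod_cast hcn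
  have hc : (0 : ℝ) < c := lt_of_lt_of_le one_pos (le_trans hb hbc)
  constructor
  · have h1 : b / c ≤ 1 := (div_le_one hc).mpr hbc
    have h2 : 1 / c ≤ b / c := by gcongr
    have h3 : 0 < b / c := by positivity
    have hD : 0 < b / c + (1 - b / c) * (1 / (2 * c)) :=
      add_pos_of_pos_of_nonneg h3 (mul_nonneg (by linarith) (by positivity))
    rw [ge_iff_le, div_le_div_iff₀ (by norm_num) hD]
    have h4 : (1 - b / c) * (1 / (2 * c)) ≤ 1 * (1 / (2 * c)) :=
      mul_le_mul_of_nonneg_right (by linarith) (by positivity)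
    have h5 : (1 : ℝ) * (1 / (2 * c)) = (1 / c) / 2 := by ring
    linarith
  · intro k' hk'
    exact Nat.choose_eq_zero_of_lt (lt_of_le_of_lt hk' (Nat.lt_succ_self _))
end

section
/- Fix integers N ≥ 2, k ≥ 1 and real A with 1 ≤ A ≤ N, and let m be an integer with 1 ≤ m ≤ N. Define p₁ = (m/N)^k / ((m/N)^k + (1 − m/N)^k · r) with r = 2A^k/N^k. Then: (a) if A < m/2, then p₁ > 1/(1 + (2/2^k)·((N−1)/N)^k); and (b) if A > 2m and m ≤ N/2, then p₁ < 1/3 when k = 2 (indeed p₁ < 1/(1 + 2·2^k·(1 − m/N)^k) ≤ 1/3). -/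
/-- correctness of the verifier in the post-selected approximate counting
algorithm. With p₁ = (m/N)^k / ((m/N)^k + (1-m/N)^k·r) and r = 2A^k/N^k:
(a) if A < m/2 then p₁ > 1/(1 + (2/2^k)·((N-1)/N)^k);
(b) if A > 2m and m ≤ N/2 then p₁ < 1/(1 + 2·2^k·(1-m/N)^k) ≤ 1/3. -/
theorem stmt10 (N k m : ℕ) (hN : 2 ≤ N) (hk : 1 ≤ k) (A : ℝ) (hA1 : 1 ≤ A)
    (hA2 : A ≤ (N : ℝ)) (hm1 : 1 ≤ m) (hm2 : m ≤ N) :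
    (A < (m : ℝ) / 2 →
      ((m : ℝ) / N) ^ k / (((m : ℝ) / N) ^ k
          + (1 - (m : ℝ) / N) ^ k * (2 * A ^ k / (N : ℝ) ^ k))
        > 1 / (1 + 2 / 2 ^ k * (((N : ℝ) - 1) / N) ^ k))
    ∧ (A > 2 * (m : ℝ) → 2 * m ≤ N →
      ((m : ℝ) / N) ^ k / (((m : ℝ) / N) ^ k
          + (1 - (m : ℝ) / N) ^ k * (2 * A ^ k / (N : ℝ) ^ k))
        < 1 / (1 + 2 * 2 ^ k * (1 - (m : ℝ) / N) ^ k)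
      ∧ 1 / (1 + 2 * 2 ^ k * (1 - (m : ℝ) / N) ^ k) ≤ 1 / 3) := by
  have hk0 : k ≠ 0 := by omega
  have hN0 : (0:ℝ) < N := by exact_mod_cast (by omega : 0 < N)
  have hm0 : (0:ℝ) < m := by exact_mod_cast (by omega : 0 < m)
  have hmN : (m:ℝ) ≤ N := by exact_mod_cast hm2
  have h1m : (1:ℝ) ≤ m := by exact_mod_cast hm1
  have hq0 : (0:ℝ) ≤ 1 - (m:ℝ)/N := by
    rw [sub_nonneg]; exact div_le_one_of_le₀ hmN hN0.le
  have hp0 : (0:ℝ) < ((m:ℝ)/N)^k := by positivity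
  have hA0 : (0:ℝ) < A := by linarith
  have hD : 0 < ((m:ℝ)/N)^k + (1 - (m:ℝ)/N)^k * (2*A^k/(N:ℝ)^k) := by positivity
  have hqeq : 1 - (m:ℝ)/N = ((N:ℝ) - m)/N := by field_simp
  constructor
  · intro hAm
    have hN1 : (0:ℝ) < (N:ℝ) - 1 := by
      have : (2:ℝ) ≤ N := by exact_mod_cast hN
      linarith
    have hc : (0:ℝ) < 1 + 2/2^k * (((N:ℝ)-1)/N)^k := by positivity
    rw [gt_iff_lt, div_lt_div_iff₀ hc hD]
    have hNm : 1 - (m:ℝ)/N ≤ ((N:ℝ)-1)/N := by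
      rw [hqeq]
      gcongr
    have hstep : (1 - (m:ℝ)/N) * A < (((N:ℝ)-1)/N) * ((m:ℝ)/2) := by
      have h1 : (1 - (m:ℝ)/N) * A ≤ (((N:ℝ)-1)/N) * A :=
        mul_le_mul_of_nonneg_right hNm hA0.le
      have h2 : (((N:ℝ)-1)/N) * A < (((N:ℝ)-1)/N) * ((m:ℝ)/2) :=
        mul_lt_mul_of_pos_left hAm (by positivity)
      linarith
    have hpow : ((1 - (m:ℝ)/N) * A)^k < ((((N:ℝ)-1)/N) * ((m:ℝ)/2))^k :=
      pow_lt_pow_left₀ hstep (by positivity) hk0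
    have key : (1 - (m:ℝ)/N)^k * (2*A^k/(N:ℝ)^k)
        < (2/2^k * (((N:ℝ)-1)/N)^k) * ((m:ℝ)/N)^k := by
      have e1 : (1 - (m:ℝ)/N)^k * (2*A^k/(N:ℝ)^k)
          = 2/(N:ℝ)^k * ((1 - (m:ℝ)/N) * A)^k := by
        rw [mul_pow]; ring
      have e2 : (2/2^k * (((N:ℝ)-1)/N)^k) * ((m:ℝ)/N)^k
          = 2/(N:ℝ)^k * ((((N:ℝ)-1)/N) * ((m:ℝ)/2))^k := by
        rw [mul_pow, div_pow, div_pow, div_pow]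
        field_simp
      rw [e1, e2]
      exact mul_lt_mul_of_pos_left hpow (by positivity)
    nlinarith [key, hp0]
  · intro hAm h2m
    have hmltN : m < N := by omega
    have hq : (0:ℝ) < 1 - (m:ℝ)/N := by
      rw [sub_pos, div_lt_one hN0]; exact_mod_cast hmltN
    have hhalf : (1:ℝ)/2 ≤ 1 - (m:ℝ)/N := by
      have h2mN : (2:ℝ)*m ≤ N := by exact_mod_cast h2m
      have : (m:ℝ)/N ≤ 1/2 := by
        rw [div_le_div_iff₀ hN0 two_pos]; linarith
      linarith
    have hc : (0:ℝ) < 1 + 2*2^k*(1 - (m:ℝ)/N)^k := by positivity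
    have h2le : (2:ℝ) ≤ 2*2^k*(1 - (m:ℝ)/N)^k := by
      have h1 : ((1:ℝ)/2)^k ≤ (1 - (m:ℝ)/N)^k := pow_le_pow_left₀ (by norm_num) hhalf k
      have h2 : ((2:ℝ))^k * ((1:ℝ)/2)^k = 1 := by
        rw [← mul_pow]; norm_num
      nlinarith [pow_pos (by norm_num : (0:ℝ) < 2) k,
        mul_le_mul_of_nonneg_left h1 (pow_pos (by norm_num : (0:ℝ) < 2) k).le]
    constructor
    · rw [div_lt_div_iff₀ hD hc]
      have hA2m : ((2:ℝ)*m)^k < A^k := pow_lt_pow_left₀ hAm (by positivity) hk0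
      have key : (2*2^k*(1 - (m:ℝ)/N)^k) * ((m:ℝ)/N)^k
          < (1 - (m:ℝ)/N)^k * (2*A^k/(N:ℝ)^k) := by
        have e1 : (2*2^k*(1 - (m:ℝ)/N)^k) * ((m:ℝ)/N)^k
            = (1-(m:ℝ)/N)^k * (2/(N:ℝ)^k) * ((2:ℝ)*m)^k := by
          rw [mul_pow, div_pow]
          field_simp
        have e2 : (1 - (m:ℝ)/N)^k * (2*A^k/(N:ℝ)^k)
            = (1-(m:ℝ)/N)^k * (2/(N:ℝ)^k) * A^k := by ring
        rw [e1, e2]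
        exact mul_lt_mul_of_pos_left hA2m (by positivity)
      nlinarith [key, hp0]
    · apply one_div_le_one_div_of_le (by norm_num)
      linarith
end

section
/- Let f : {0,1}^N → {0,1} be a non-constant symmetric function with values f_k on Hamming weight k, and let T be an index with f_T = 0 and f_{T+1} = 1 minimizing |2T − N + 1|. Suppose p/q is a degree-d rational function with nonnegative coefficients a_{S,T'}, b_{S,T'} ≥ 0 in symmetrized monomial form (i.e., p(k) = Σ a_{S,T'} γ_{S,T'} k···(k−|S|+1)(N−k)···(N−k−|T'|+1), similarly q) with q(T), q(T+1) > 0, satisfying 0 ≤ p(T) ≤ ε·q(T) and (1−ε)·q(T+1) ≤ p(T+1) for some 0 < ε < 1/2. Then 2d ≥ (N+1) − sqrt((N+1)² − 4(1 − ε/(1−ε))(N−T)(T+1)). In particular for ε = 1/3, d ≥ (N − |2T − N + 1|)/8 ... i.e., d ≥ (N − Γ(f))/8 where Γ(f) = min{|2k−N+1| : f_k ≠ f_{k+1}}. -/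
open Finset

lemma prodP_shift (s : ℕ) (x : ℝ) :
    (∏ j ∈ Finset.range s, (x + 1 - (j : ℝ))) * (x + 1 - (s : ℝ))
      = (x + 1) * ∏ j ∈ Finset.range s, (x - (j : ℝ)) := by
  have h1 := Finset.prod_range_succ (fun j : ℕ => x + 1 - (j : ℝ)) s
  have h2 := Finset.prod_range_succ' (fun j : ℕ => x + 1 - (j : ℝ)) s
  have h3 : (∏ j ∈ Finset.range s, (x + 1 - ((j + 1 : ℕ) : ℝ)))
      = ∏ j ∈ Finset.range s, (x - (j : ℝ)) :=
    Finset.prod_congr rfl fun j _ => by push_cast; ring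
  simp only [h3] at h2
  rw [← h1, h2]
  push_cast
  ring

lemma prodQ_shift (t : ℕ) (n x : ℝ) :
    (∏ j ∈ Finset.range t, (n - (x + 1) - (j : ℝ))) * (n - x)
      = (n - x - (t : ℝ)) * ∏ j ∈ Finset.range t, (n - x - (j : ℝ)) := by
  have h1 := Finset.prod_range_succ (fun j : ℕ => n - x - (j : ℝ)) t
  have h2 := Finset.prod_range_succ' (fun j : ℕ => n - x - (j : ℝ)) t
  have h3 : (∏ j ∈ Finset.range t, (n - x - ((j + 1 : ℕ) : ℝ)))
      = ∏ j ∈ Finset.range t, (n - (x + 1) - (j : ℝ)) :=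
    Finset.prod_congr rfl fun j _ => by push_cast; ring
  simp only [h3] at h2
  rw [h1] at h2
  push_cast at h2 ⊢
  linarith [h2]

section Mono
variable (N T s t d : ℕ)

lemma mono_ineqs (hst : s + t ≤ d) (hdT : d ≤ T) (hdN : d + T + 1 ≤ N) :
    ((∏ j ∈ Finset.range s, ((T : ℝ) + 1 - (j : ℝ)))
      * (∏ j ∈ Finset.range t, ((N : ℝ) - ((T : ℝ) + 1) - (j : ℝ)))) * ((T : ℝ) + 1 - (d : ℝ))
      ≤ ((∏ j ∈ Finset.range s, ((T : ℝ) - (j : ℝ)))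
      * (∏ j ∈ Finset.range t, ((N : ℝ) - (T : ℝ) - (j : ℝ)))) * ((T : ℝ) + 1)
    ∧ ((∏ j ∈ Finset.range s, ((T : ℝ) - (j : ℝ)))
      * (∏ j ∈ Finset.range t, ((N : ℝ) - (T : ℝ) - (j : ℝ)))) * ((N : ℝ) - (T : ℝ) - (d : ℝ))
      ≤ ((∏ j ∈ Finset.range s, ((T : ℝ) + 1 - (j : ℝ)))
      * (∏ j ∈ Finset.range t, ((N : ℝ) - ((T : ℝ) + 1) - (j : ℝ)))) * ((N : ℝ) - (T : ℝ)) := by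
  have hsT : s ≤ T := le_trans (le_trans (Nat.le_add_right s t) hst) hdT
  have htd : t ≤ d := le_trans (Nat.le_add_left t s) hst
  set P0 := ∏ j ∈ Finset.range s, ((T : ℝ) - (j : ℝ)) with hP0d
  set P1 := ∏ j ∈ Finset.range s, ((T : ℝ) + 1 - (j : ℝ)) with hP1d
  set Q0 := ∏ j ∈ Finset.range t, ((N : ℝ) - (T : ℝ) - (j : ℝ)) with hQ0d
  set Q1 := ∏ j ∈ Finset.range t, ((N : ℝ) - ((T : ℝ) + 1) - (j : ℝ)) with hQ1d
  have hP0 : 0 ≤ P0 := Finset.prod_nonneg fun j hj => by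
    have hj' : j < s := Finset.mem_range.mp hj
    have : (j : ℝ) < (T : ℝ) := by exact_mod_cast lt_of_lt_of_le hj' hsT
    linarith
  have hP1 : 0 ≤ P1 := Finset.prod_nonneg fun j hj => by
    have hj' : j < s := Finset.mem_range.mp hj
    have : (j : ℝ) < (T : ℝ) := by exact_mod_cast lt_of_lt_of_le hj' hsT
    linarith
  have hQ0 : 0 ≤ Q0 := Finset.prod_nonneg fun j hj => by
    have hj' : j < t := Finset.mem_range.mp hj
    have h4 : (j : ℝ) + (T : ℝ) + 1 ≤ (N : ℝ) := by
      have : j + T + 1 ≤ N := by omega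
      exact_mod_cast this
    linarith
  have hQ1 : 0 ≤ Q1 := Finset.prod_nonneg fun j hj => by
    have hj' : j < t := Finset.mem_range.mp hj
    have h4 : (j : ℝ) + (T : ℝ) + 2 ≤ (N : ℝ) := by
      have : j + T + 2 ≤ N := by omega
      exact_mod_cast this
    linarith
  have idP := prodP_shift s (T : ℝ)
  have idQ := prodQ_shift t (N : ℝ) (T : ℝ)
  rw [← hP0d, ← hP1d] at idP
  rw [← hQ0d, ← hQ1d] at idQ
  -- idP : P1 * (T+1-s) = (T+1) * P0
  -- idQ : Q1 * (N-T) = (N-T-t) * Q0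
  have e : P1 * Q1 * (((T : ℝ) + 1 - (s : ℝ)) * ((N : ℝ) - (T : ℝ)))
      = P0 * Q0 * (((T : ℝ) + 1) * ((N : ℝ) - (T : ℝ) - (t : ℝ))) := by
    calc P1 * Q1 * (((T : ℝ) + 1 - (s : ℝ)) * ((N : ℝ) - (T : ℝ)))
        = (P1 * ((T : ℝ) + 1 - (s : ℝ))) * (Q1 * ((N : ℝ) - (T : ℝ))) := by ring
      _ = (((T : ℝ) + 1) * P0) * (((N : ℝ) - (T : ℝ) - (t : ℝ)) * Q0) := by rw [idP, idQ]
      _ = P0 * Q0 * (((T : ℝ) + 1) * ((N : ℝ) - (T : ℝ) - (t : ℝ))) := by ring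
  have hNT : (0 : ℝ) < (N : ℝ) - (T : ℝ) := by
    have : T + 1 ≤ N := by omega
    have := (Nat.cast_le (α := ℝ)).mpr this
    push_cast at this; linarith
  have hT1 : (0 : ℝ) < (T : ℝ) + 1 := by positivity
  have hsd : (s : ℝ) ≤ (d : ℝ) := by
    exact_mod_cast le_trans (Nat.le_add_right s t) hst
  have htdR : (t : ℝ) ≤ (d : ℝ) := by exact_mod_cast htd
  have hdTR : (d : ℝ) ≤ (T : ℝ) := by exact_mod_cast hdT
  have hdNR : (d : ℝ) + (T : ℝ) + 1 ≤ (N : ℝ) := by exact_mod_cast hdN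
  constructor
  · -- P1*Q1*(T+1-d) ≤ P0*Q0*(T+1)
    have h6 : 0 ≤ (P1 * Q1) * (((d : ℝ) - (s : ℝ)) * ((N : ℝ) - (T : ℝ))) :=
      mul_nonneg (mul_nonneg hP1 hQ1) (mul_nonneg (by linarith) (le_of_lt hNT))
    have h7 : 0 ≤ (P0 * Q0) * ((t : ℝ) * ((T : ℝ) + 1)) :=
      mul_nonneg (mul_nonneg hP0 hQ0) (mul_nonneg (Nat.cast_nonneg t) (le_of_lt hT1))
    have h5 : P1 * Q1 * ((T : ℝ) + 1 - (d : ℝ)) * ((N : ℝ) - (T : ℝ))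
        ≤ P0 * Q0 * ((T : ℝ) + 1) * ((N : ℝ) - (T : ℝ)) := by
      linarith [e, h6, h7]
    exact le_of_mul_le_mul_right (by linarith [h5]) hNT
  · have h8 : 0 ≤ (P0 * Q0) * (((d : ℝ) - (t : ℝ)) * ((T : ℝ) + 1)) :=
      mul_nonneg (mul_nonneg hP0 hQ0) (mul_nonneg (by linarith) (le_of_lt hT1))
    have h9 : 0 ≤ (P1 * Q1) * ((s : ℝ) * ((N : ℝ) - (T : ℝ))) :=
      mul_nonneg (mul_nonneg hP1 hQ1) (mul_nonneg (Nat.cast_nonneg s) (le_of_lt hNT))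
    have h5 : P0 * Q0 * ((N : ℝ) - (T : ℝ) - (d : ℝ)) * ((T : ℝ) + 1)
        ≤ P1 * Q1 * ((N : ℝ) - (T : ℝ)) * ((T : ℝ) + 1) := by
      linarith [e, h8, h9]
    exact le_of_mul_le_mul_right (by linarith [h5]) hT1

end Mono

lemma sum_ineqs (N d T : ℕ) (hdT : d ≤ T) (hdN : d + T + 1 ≤ N)
    (coef : Finset (Fin N) × Finset (Fin N) → ℝ) (hc : ∀ st, 0 ≤ coef st) :
    (∑ st ∈ Finset.univ.filter
        (fun st : Finset (Fin N) × Finset (Fin N) =>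
          1 ≤ st.1.card + st.2.card ∧ st.1.card + st.2.card ≤ d),
      coef st * (((N - st.1.card - st.2.card).factorial : ℝ) / (N.factorial : ℝ))
        * (∏ j ∈ Finset.range st.1.card, ((T : ℝ) + 1 - (j : ℝ)))
        * (∏ j ∈ Finset.range st.2.card, ((N : ℝ) - ((T : ℝ) + 1) - (j : ℝ))))
      * ((T : ℝ) + 1 - (d : ℝ))
    ≤ (∑ st ∈ Finset.univ.filter
        (fun st : Finset (Fin N) × Finset (Fin N) =>
          1 ≤ st.1.card + st.2.card ∧ st.1.card + st.2.card ≤ d),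
      coef st * (((N - st.1.card - st.2.card).factorial : ℝ) / (N.factorial : ℝ))
        * (∏ j ∈ Finset.range st.1.card, ((T : ℝ) - (j : ℝ)))
        * (∏ j ∈ Finset.range st.2.card, ((N : ℝ) - (T : ℝ) - (j : ℝ))))
      * ((T : ℝ) + 1)
    ∧ (∑ st ∈ Finset.univ.filter
        (fun st : Finset (Fin N) × Finset (Fin N) =>
          1 ≤ st.1.card + st.2.card ∧ st.1.card + st.2.card ≤ d),
      coef st * (((N - st.1.card - st.2.card).factorial : ℝ) / (N.factorial : ℝ))
        * (∏ j ∈ Finset.range st.1.card, ((T : ℝ) - (j : ℝ)))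
        * (∏ j ∈ Finset.range st.2.card, ((N : ℝ) - (T : ℝ) - (j : ℝ))))
      * ((N : ℝ) - (T : ℝ) - (d : ℝ))
    ≤ (∑ st ∈ Finset.univ.filter
        (fun st : Finset (Fin N) × Finset (Fin N) =>
          1 ≤ st.1.card + st.2.card ∧ st.1.card + st.2.card ≤ d),
      coef st * (((N - st.1.card - st.2.card).factorial : ℝ) / (N.factorial : ℝ))
        * (∏ j ∈ Finset.range st.1.card, ((T : ℝ) + 1 - (j : ℝ)))
        * (∏ j ∈ Finset.range st.2.card, ((N : ℝ) - ((T : ℝ) + 1) - (j : ℝ))))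
      * ((N : ℝ) - (T : ℝ)) := by
  constructor
  · rw [Finset.sum_mul, Finset.sum_mul]
    apply Finset.sum_le_sum
    intro st hst
    obtain ⟨-, h2⟩ := (Finset.mem_filter.mp hst).2
    have key := (mono_ineqs N T st.1.card st.2.card d h2 hdT hdN).1
    have hcc : 0 ≤ coef st * (((N - st.1.card - st.2.card).factorial : ℝ) / (N.factorial : ℝ)) :=
      mul_nonneg (hc st) (by positivity)
    have h := mul_le_mul_of_nonneg_left key hcc
    nlinarith [h]
  · rw [Finset.sum_mul, Finset.sum_mul]
    apply Finset.sum_le_sum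
    intro st hst
    obtain ⟨-, h2⟩ := (Finset.mem_filter.mp hst).2
    have key := (mono_ineqs N T st.1.card st.2.card d h2 hdT hdN).2
    have hcc : 0 ≤ coef st * (((N - st.1.card - st.2.card).factorial : ℝ) / (N.factorial : ℝ)) :=
      mul_nonneg (hc st) (by positivity)
    have h := mul_le_mul_of_nonneg_left key hcc
    nlinarith [h]

set_option maxHeartbeats 2000000 in
/-- generalized lower bound for symmetric functions. If the symmetric
function (given by its value fk on each Hamming weight) has a 0-to-1 step at T
minimizing |2T-N+1|, and p/q is a degree-d rational function in symmetrized
nonnegative-coefficient monomial form with 0 ≤ p(T) ≤ ε·q(T) and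
(1-ε)·q(T+1) ≤ p(T+1), then 2d ≥ (N+1) - sqrt((N+1)² - 4(1-ε/(1-ε))(N-T)(T+1));
in particular d ≥ (N - |2T-N+1|)/8 for ε = 1/3. -/
theorem stmt11 (N d T : ℕ) (fk : ℕ → Bool) (hT : T ≤ N - 1)
    (hT0 : fk T = false) (hT1 : fk (T + 1) = true)
    (hmin : ∀ k : ℕ, k ≤ N - 1 → fk k ≠ fk (k + 1) →
      |2 * (T : ℤ) - N + 1| ≤ |2 * (k : ℤ) - N + 1|)
    (ε : ℝ) (hε0 : 0 < ε) (hε1 : ε < 1 / 2)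
    (a b : Finset (Fin N) × Finset (Fin N) → ℝ)
    (ha : ∀ st, 0 ≤ a st) (hb : ∀ st, 0 ≤ b st)
    (p q : ℝ → ℝ)
    (hp : ∀ x : ℝ, p x = ∑ st ∈ Finset.univ.filter
        (fun st : Finset (Fin N) × Finset (Fin N) =>
          1 ≤ st.1.card + st.2.card ∧ st.1.card + st.2.card ≤ d),
      a st * (((N - st.1.card - st.2.card).factorial : ℝ) / (N.factorial : ℝ))
        * (∏ j ∈ Finset.range st.1.card, (x - (j : ℝ)))
        * (∏ j ∈ Finset.range st.2.card, ((N : ℝ) - x - (j : ℝ))))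
    (hq : ∀ x : ℝ, q x = ∑ st ∈ Finset.univ.filter
        (fun st : Finset (Fin N) × Finset (Fin N) =>
          1 ≤ st.1.card + st.2.card ∧ st.1.card + st.2.card ≤ d),
      b st * (((N - st.1.card - st.2.card).factorial : ℝ) / (N.factorial : ℝ))
        * (∏ j ∈ Finset.range st.1.card, (x - (j : ℝ)))
        * (∏ j ∈ Finset.range st.2.card, ((N : ℝ) - x - (j : ℝ))))
    (hq1 : 0 < q (T : ℝ)) (hq2 : 0 < q ((T : ℝ) + 1))
    (hp1 : 0 ≤ p (T : ℝ)) (hp2 : p (T : ℝ) ≤ ε * q (T : ℝ))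
    (hp3 : (1 - ε) * q ((T : ℝ) + 1) ≤ p ((T : ℝ) + 1)) :
    2 * (d : ℝ) ≥ ((N : ℝ) + 1)
      - Real.sqrt (((N : ℝ) + 1) ^ 2 - 4 * (1 - ε / (1 - ε)) * ((N : ℝ) - T) * ((T : ℝ) + 1))
    ∧ (ε = 1 / 3 → (d : ℝ) ≥ ((N : ℝ) - ((|2 * (T : ℤ) - N + 1| : ℤ) : ℝ)) / 8) := by
  have hε' : (0 : ℝ) < 1 - ε := by linarith
  -- rule out N = 0
  by_cases hN : N = 0
  · exfalso
    have hz : q (T : ℝ) = 0 := by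
      rw [hq]
      apply Finset.sum_eq_zero
      intro st hst
      exfalso
      have h1 := (Finset.mem_filter.mp hst).2.1
      have hc1 : st.1.card ≤ 0 := by
        subst hN
        calc st.1.card ≤ (Finset.univ : Finset (Fin 0)).card := Finset.card_le_univ st.1
          _ = 0 := by simp
      have hc2 : st.2.card ≤ 0 := by
        subst hN
        calc st.2.card ≤ (Finset.univ : Finset (Fin 0)).card := Finset.card_le_univ st.2
          _ = 0 := by simp
      omega
    linarith [hq1, hz.symm.le]
  have hTN : T + 1 ≤ N := by omega
  have hTNR : (T : ℝ) + 1 ≤ (N : ℝ) := by exact_mod_cast hTN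
  have hNT0 : (0 : ℝ) < (N : ℝ) - (T : ℝ) := by linarith
  have hT10 : (0 : ℝ) < (T : ℝ) + 1 := by positivity
  -- part 1
  have part1 : 2 * (d : ℝ) ≥ ((N : ℝ) + 1)
      - Real.sqrt (((N : ℝ) + 1) ^ 2
        - 4 * (1 - ε / (1 - ε)) * ((N : ℝ) - T) * ((T : ℝ) + 1)) := by
    by_cases hcase : d ≤ T ∧ d + T + 1 ≤ N
    · obtain ⟨hdT, hdN⟩ := hcase
      have hA := (sum_ineqs N d T hdT hdN a ha).1
      have hB := (sum_ineqs N d T hdT hdN b hb).2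
      rw [← hp ((T : ℝ) + 1), ← hp (T : ℝ)] at hA
      rw [← hq (T : ℝ), ← hq ((T : ℝ) + 1)] at hB
      have hα : (0 : ℝ) < (T : ℝ) + 1 - (d : ℝ) := by
        have : (d : ℝ) ≤ (T : ℝ) := by exact_mod_cast hdT
        linarith
      have hγ : (0 : ℝ) < (N : ℝ) - (T : ℝ) - (d : ℝ) := by
        have : (d : ℝ) + (T : ℝ) + 1 ≤ (N : ℝ) := by exact_mod_cast hdN
        linarith
      -- chain the inequalities
      have c1 : (1 - ε) * q ((T : ℝ) + 1) * (((T : ℝ) + 1 - (d : ℝ)) * ((N : ℝ) - (T : ℝ) - (d : ℝ)))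
          ≤ p ((T : ℝ) + 1) * (((T : ℝ) + 1 - (d : ℝ)) * ((N : ℝ) - (T : ℝ) - (d : ℝ))) :=
        mul_le_mul_of_nonneg_right hp3 (by positivity)
      have c2 : p ((T : ℝ) + 1) * ((T : ℝ) + 1 - (d : ℝ)) * ((N : ℝ) - (T : ℝ) - (d : ℝ))
          ≤ p (T : ℝ) * ((T : ℝ) + 1) * ((N : ℝ) - (T : ℝ) - (d : ℝ)) :=
        mul_le_mul_of_nonneg_right hA (le_of_lt hγ)
      have c3 : p (T : ℝ) * (((T : ℝ) + 1) * ((N : ℝ) - (T : ℝ) - (d : ℝ)))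
          ≤ ε * q (T : ℝ) * (((T : ℝ) + 1) * ((N : ℝ) - (T : ℝ) - (d : ℝ))) :=
        mul_le_mul_of_nonneg_right hp2 (by positivity)
      have c4 : q (T : ℝ) * ((N : ℝ) - (T : ℝ) - (d : ℝ)) * (ε * ((T : ℝ) + 1))
          ≤ q ((T : ℝ) + 1) * ((N : ℝ) - (T : ℝ)) * (ε * ((T : ℝ) + 1)) :=
        mul_le_mul_of_nonneg_right hB (by positivity)
      have c5 : ((1 - ε) * (((T : ℝ) + 1 - (d : ℝ)) * ((N : ℝ) - (T : ℝ) - (d : ℝ)))) * q ((T : ℝ) + 1)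
          ≤ (ε * (((T : ℝ) + 1) * ((N : ℝ) - (T : ℝ)))) * q ((T : ℝ) + 1) := by
        linarith [c1, c2, c3, c4]
      have K : (1 - ε) * (((T : ℝ) + 1 - (d : ℝ)) * ((N : ℝ) - (T : ℝ) - (d : ℝ)))
          ≤ ε * (((T : ℝ) + 1) * ((N : ℝ) - (T : ℝ))) :=
        le_of_mul_le_mul_right c5 hq2
      have h6 : ((T : ℝ) + 1 - (d : ℝ)) * ((N : ℝ) - (T : ℝ) - (d : ℝ))
          ≤ ε / (1 - ε) * (((T : ℝ) + 1) * ((N : ℝ) - (T : ℝ))) := by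
        rw [div_mul_eq_mul_div, le_div_iff₀ hε']
        linarith [K]
      have hD : ((N : ℝ) + 1 - 2 * (d : ℝ)) ^ 2
          ≤ ((N : ℝ) + 1) ^ 2 - 4 * (1 - ε / (1 - ε)) * ((N : ℝ) - T) * ((T : ℝ) + 1) := by
        linarith [h6]
      have hs := Real.sqrt_le_sqrt hD
      rw [Real.sqrt_sq_eq_abs] at hs
      have := le_abs_self ((N : ℝ) + 1 - 2 * (d : ℝ))
      linarith
    · have hz : (0 : ℝ) < ε / (1 - ε) := div_pos hε0 hε'
      have hDge : (2 * (T : ℝ) - (N : ℝ) + 1) ^ 2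
          ≤ ((N : ℝ) + 1) ^ 2 - 4 * (1 - ε / (1 - ε)) * ((N : ℝ) - T) * ((T : ℝ) + 1) := by
        nlinarith [mul_pos (mul_pos hz hT10) hNT0]
      have hs := Real.sqrt_le_sqrt hDge
      rw [Real.sqrt_sq_eq_abs] at hs
      have habs1 := le_abs_self (2 * (T : ℝ) - (N : ℝ) + 1)
      have habs2 := neg_abs_le (2 * (T : ℝ) - (N : ℝ) + 1)
      rcases not_and_or.mp hcase with h | h
      · push_neg at h
        have : (T : ℝ) + 1 ≤ (d : ℝ) := by exact_mod_cast h
        linarith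
      · push_neg at h
        have : (N : ℝ) - (T : ℝ) ≤ (d : ℝ) := by
          have : N ≤ d + T := by omega
          have := (Nat.cast_le (α := ℝ)).mpr this
          push_cast at this
          linarith
        linarith
  refine ⟨part1, fun hε3 => ?_⟩
  subst hε3
  have hDeq : ((N : ℝ) + 1) ^ 2 - 4 * (1 - (1/3 : ℝ) / (1 - 1/3)) * ((N : ℝ) - T) * ((T : ℝ) + 1)
      = ((N : ℝ) + 1) ^ 2 - 2 * (((N : ℝ) - T) * ((T : ℝ) + 1)) := by
    norm_num
    ring
  rw [hDeq] at part1
  set g : ℝ := ((|2 * (T : ℤ) - N + 1| : ℤ) : ℝ) with hgdef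
  have hg0 : (0 : ℝ) ≤ g := by
    rw [hgdef]
    exact_mod_cast abs_nonneg (2 * (T : ℤ) - N + 1)
  set B : ℝ := ((N : ℝ) + 1) - ((N : ℝ) - g) / 4 with hBdef
  have hB0 : 0 ≤ B := by
    have : (0 : ℝ) ≤ (N : ℝ) := Nat.cast_nonneg N
    rw [hBdef]; linarith
  have hXB : ((N : ℝ) + 1) ^ 2 - 2 * (((N : ℝ) - T) * ((T : ℝ) + 1)) ≤ B ^ 2 := by
    rcases abs_cases (2 * (T : ℤ) - N + 1) with ⟨h1, h2⟩ | ⟨h1, h2⟩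
    · have hg : g = 2 * (T : ℝ) - (N : ℝ) + 1 := by
        rw [hgdef, h1]; push_cast; ring
      have h2' : (0 : ℝ) ≤ 2 * (T : ℝ) - (N : ℝ) + 1 := by exact_mod_cast h2
      rw [hBdef, hg]
      nlinarith [hNT0, hT10, mul_nonneg (le_of_lt hNT0) h2']
    · have hg : g = -(2 * (T : ℝ) - (N : ℝ) + 1) := by
        rw [hgdef, h1]; push_cast; ring
      have h2' : 2 * (T : ℝ) - (N : ℝ) + 1 ≤ 0 := by
        have : 2 * (T : ℤ) - N + 1 ≤ 0 := le_of_lt h2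
        exact_mod_cast this
      rw [hBdef, hg]
      nlinarith [hNT0, hT10, mul_nonneg (le_of_lt hT10) (neg_nonneg.mpr h2')]
  have hs : Real.sqrt (((N : ℝ) + 1) ^ 2 - 2 * (((N : ℝ) - T) * ((T : ℝ) + 1))) ≤ B :=
    le_trans (Real.sqrt_le_sqrt hXB) (le_of_eq (Real.sqrt_sq hB0))
  rw [hBdef] at hs
  linarith [part1, hs]
end

section
/- (Sherstov error amplification identity, squared case) Suppose a rational function P/Q with Q > 0 on domain X satisfies |P(x)/Q(x) − f(x)| ≤ ε for a Boolean function f : X → {0,1} and 0 < ε < 1/2. Then the rational function P²/(P² + ε(1−ε)Q²) satisfies: for x with f(x)=1, 1 − ε ≤ P(x)²/(P(x)² + ε(1−ε)Q(x)²) ≤ 1, and for x with f(x)=0, 0 ≤ P(x)²/(P(x)² + ε(1−ε)Q(x)²) ≤ ε. Hence the degree at most doubles while the error stays at most ε. -/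
/-- Sherstov error amplification, squared case: if Q > 0 and
|P/Q - f| ≤ ε pointwise for a Boolean-valued f and 0 < ε < 1/2, then
P²/(P² + ε(1-ε)Q²) lies in [1-ε, 1] on 1-inputs and in [0, ε] on 0-inputs. -/
theorem stmt14 {X : Type*} (f : X → Bool) (P Q : X → ℝ) (hQ : ∀ x, 0 < Q x)
    (ε : ℝ) (hε0 : 0 < ε) (hε1 : ε < 1 / 2)
    (happrox : ∀ x, |P x / Q x - (if f x then (1 : ℝ) else 0)| ≤ ε) :
    ∀ x : X,
      (f x = true →
        1 - ε ≤ P x ^ 2 / (P x ^ 2 + ε * (1 - ε) * Q x ^ 2)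
        ∧ P x ^ 2 / (P x ^ 2 + ε * (1 - ε) * Q x ^ 2) ≤ 1)
      ∧ (f x = false →
        0 ≤ P x ^ 2 / (P x ^ 2 + ε * (1 - ε) * Q x ^ 2)
        ∧ P x ^ 2 / (P x ^ 2 + ε * (1 - ε) * Q x ^ 2) ≤ ε) := by
  intro x
  have hq := hQ x
  have hc : 0 < ε * (1 - ε) := by nlinarith
  have hD : 0 < P x ^ 2 + ε * (1 - ε) * Q x ^ 2 := by positivity
  constructor
  · intro hf
    have h := happrox x
    rw [hf] at h; simp only [if_true] at h
    have h1 : 1 - ε ≤ P x / Q x := by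
      have := abs_le.mp h; linarith [this.1]
    have hP : (1 - ε) * Q x ≤ P x := by
      rw [← le_div_iff₀ hq]; linarith [h1]
    have hP2 : (1 - ε) ^ 2 * Q x ^ 2 ≤ P x ^ 2 := by nlinarith [mul_le_mul hP hP (by nlinarith) (by nlinarith : (0:ℝ) ≤ P x)]
    constructor
    · rw [le_div_iff₀ hD]; nlinarith [mul_pos hq hq]
    · rw [div_le_one hD]; nlinarith [mul_pos hq hq]
  · intro hf
    have h := happrox x
    rw [hf] at h; norm_num at h
    have h1 : |P x / Q x| ≤ ε := h
    have hP : |P x| ≤ ε * Q x := by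
      rw [abs_div] at h1
      rw [abs_of_pos hq] at h1
      calc |P x| = |P x| / Q x * Q x := by field_simp
        _ ≤ ε * Q x := by
            apply mul_le_mul_of_nonneg_right h1 hq.le
    have hP2 : P x ^ 2 ≤ ε ^ 2 * Q x ^ 2 := by
      have := sq_abs (P x)
      nlinarith [abs_nonneg (P x), sq_nonneg (|P x| - ε * Q x)]
    constructor
    · positivity
    · rw [div_le_iff₀ hD]; nlinarith
end
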